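/- Let n ≥ 1 and let K := Sp_{2n}(ℝ) ∩ O_{2n}(ℝ) (the standard maximal compact subgroup). For g, h ∈ Sp_{2n}(ℝ), one has ‖Pl(g)‖ = ‖Pl(h)‖ if and only if there exist q ∈ [P,P](ℝ) and k ∈ K such that g = q·h·k. (Proposition 2.3, Archimedean case: the map X(ℝ)/K → ℝ_{>0}, [P,P](ℝ)gK ↦ ‖Pl(g)‖, is a well-defined injection.) -/

import Mathlib

open Matrix

/-- The standard symplectic structure matrix `J = (0, Iₙ; -Iₙ, 0)`. -/
def Jmat (F : Type*) [Field F] (n : ℕ) : Matrix (Fin n ⊕ Fin n) (Fin n ⊕ Fin n) F :=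
  Matrix.fromBlocks 0 1 (-1) 0

/-- `Sp_{2n}(F) = {g : g * J⁻¹ * gᵀ * J = 1}`. -/
def Sp (F : Type*) [Field F] (n : ℕ) : Set (Matrix (Fin n ⊕ Fin n) (Fin n ⊕ Fin n) F) :=
  {g | g * (Jmat F n)⁻¹ * gᵀ * Jmat F n = 1}

/-- `[P,P](F)`: elements of `Sp_{2n}(F)` of block form `(A, B; 0, (Aᵀ)⁻¹)` with `det A = 1`. -/
def SiegelPP (F : Type*) [Field F] (n : ℕ) :
    Set (Matrix (Fin n ⊕ Fin n) (Fin n ⊕ Fin n) F) :=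
  {g | g ∈ Sp F n ∧ ∃ A B : Matrix (Fin n) (Fin n) F,
    g = Matrix.fromBlocks A B 0 Aᵀ⁻¹ ∧ A.det = 1}

/-- The Plücker map: the wedge product (in the `n`-th exterior power of the space of row
vectors `F^{2n}`) of the last `n` rows of `g`, from top to bottom. -/
noncomputable def Pl (F : Type*) [Field F] (n : ℕ)
    (g : Matrix (Fin n ⊕ Fin n) (Fin n ⊕ Fin n) F) :
    ExteriorAlgebra F ((Fin n ⊕ Fin n) → F) :=
  ExteriorAlgebra.ιMulti F n (fun i => g (Sum.inr i))

/-- The `j`-th element (in increasing order, with the standard identification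
`Fin n ⊕ Fin n ≅ Fin 2n`) of a subset `s` of the index set of size `n`. -/
noncomputable def colsOf (n : ℕ) (s : Finset (Fin n ⊕ Fin n)) (hs : s.card = n) :
    Fin n → Fin n ⊕ Fin n := fun j =>
  finSumFinEquiv.symm
    (((s.image finSumFinEquiv).orderIsoOfFin
      (by rw [Finset.card_image_of_injective _ finSumFinEquiv.injective, hs]) j : Fin (n + n)))

/-- The coordinate functional on `⋀ⁿ F^{2n}` dual to the standard basis vector
`e_{α₁} ∧ ⋯ ∧ e_{αₙ}` where `s = {α₁ < ⋯ < αₙ}`. -/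
noncomputable def detCoord (F : Type*) [Field F] (n : ℕ) (s : Finset (Fin n ⊕ Fin n))
    (hs : s.card = n) : ExteriorAlgebra F ((Fin n ⊕ Fin n) → F) →ₗ[F] F :=
  ExteriorAlgebra.liftAlternating fun i =>
    if h : i = n then
      ((Matrix.detRowAlternating).compLinearMap
        (LinearMap.funLeft F F (colsOf n s hs))).domDomCongr (finCongr h.symm)
    else 0

/-- The Euclidean norm `‖x‖ = (Σₐ xₐ²)^{1/2}` of an element of `⋀ⁿ ℝ^{2n}`, computed in the
standard induced basis. -/
noncomputable def realWedgeNorm (n : ℕ)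
    (x : ExteriorAlgebra ℝ ((Fin n ⊕ Fin n) → ℝ)) : ℝ :=
  Real.sqrt (∑ s : {s : Finset (Fin n ⊕ Fin n) // s.card = n}, (detCoord ℝ n s.1 s.2 x) ^ 2)

/-!
Write `M g` for the bottom `n × 2n` block of rows of `g`. By Cauchy–Binet,
`‖Pl g‖² = det (M g * (M g)ᵀ)`. Left multiplication by `(A, B; 0, (Aᵀ)⁻¹)` replaces `M g` by
`(Aᵀ)⁻¹ * M g` and right multiplication by an orthogonal `k` replaces it by `M g * k`; when
`det A = 1` neither changes `det (M g * (M g)ᵀ)`. Conversely, every `g ∈ Sp_{2n}(ℝ)` factors as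
`g = p * k` with `k ∈ K` and `p` block upper triangular with lower-right block `√(M g * (M g)ᵀ)`,
of determinant `‖Pl g‖`. If `‖Pl g‖ = ‖Pl h‖`, then `p_g * p_h⁻¹` lies in `[P,P](ℝ)` and
`g = (p_g * p_h⁻¹) * h * (k_hᵀ * k_g)`.
-/

lemma Finset.image_univ_eq_of_injective {X : Type*} [DecidableEq X] {m : ℕ} {s : Finset X}
    {f : Fin m → X} (hf : Function.Injective f) (hfs : ∀ i, f i ∈ s) (hs : s.card = m) :
    Finset.univ.image f = s :=
  Finset.eq_of_subset_of_card_le (by simpa [Finset.subset_iff] using hfs)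
    (by rw [Finset.card_image_of_injective _ hf, Finset.card_univ, Fintype.card_fin, hs])

section Enumeration
variable {X : Type*} [DecidableEq X] {m : ℕ} (c : ∀ s : Finset X, s.card = m → Fin m → X)

lemma injective_enum_comp_perm (hc : ∀ s hs, Function.Injective (c s hs))
    (hcs : ∀ s hs i, c s hs i ∈ s) :
    Function.Injective fun x : {s : Finset X // s.card = m} × Equiv.Perm (Fin m) =>
      c x.1 x.1.2 ∘ x.2 := by
  rintro ⟨⟨s, hs⟩, σ⟩ ⟨⟨t, ht⟩, τ⟩ h
  obtain rfl : s = t := by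
    have himage := congrArg (Finset.univ.image ·) h
    simpa only [← Finset.image_image, Finset.image_univ_equiv,
      Finset.image_univ_eq_of_injective (hc s hs) (hcs s hs) hs,
      Finset.image_univ_eq_of_injective (hc t ht) (hcs t ht) ht] using himage
  simp only [Prod.mk.injEq, true_and]
  ext i
  exact congrArg Fin.val (hc s hs (congrFun h i))

lemma exists_enum_comp_perm_eq (hc : ∀ s hs, Function.Injective (c s hs))
    (hcs : ∀ s hs i, c s hs i ∈ s) {p : Fin m → X} (hp : Function.Injective p) :
    ∃ x : {s : Finset X // s.card = m} × Equiv.Perm (Fin m), c x.1 x.1.2 ∘ x.2 = p := by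
  set s := Finset.univ.image p
  have hs : s.card = m := by
    rw [Finset.card_image_of_injective _ hp, Finset.card_univ, Fintype.card_fin]
  have hsurj : ∀ i, ∃ j, c s hs j = p i := fun i => by
    have hi : p i ∈ Finset.univ.image (c s hs) := by
      rw [Finset.image_univ_eq_of_injective (hc s hs) (hcs s hs) hs]
      exact Finset.mem_image_of_mem p (Finset.mem_univ i)
    simpa using hi
  choose σ hσ using hsurj
  have hσ_inj : Function.Injective σ := fun i j h => hp (by rw [← hσ, ← hσ, h])
  exact ⟨(⟨s, hs⟩, Equiv.ofBijective σ (Finite.injective_iff_bijective.mp hσ_inj)), funext hσ⟩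

end Enumeration

namespace Matrix
variable {R X : Type*} [CommRing R] {m : ℕ}

theorem det_mul_eq_sum_prod_mul_det_submatrix [Fintype X] (N : Matrix (Fin m) X R)
    (P : Matrix X (Fin m) R) :
    (N * P).det = ∑ p : Fin m → X, (∏ i, P (p i) i) * (N.submatrix id p).det := by
  simp only [det_apply', mul_apply, Finset.prod_univ_sum, Finset.mul_sum, Fintype.piFinset_univ,
    submatrix_apply, id_eq]
  rw [Finset.sum_comm]
  refine Finset.sum_congr rfl fun p _ => Finset.sum_congr rfl fun σ _ => ?_
  rw [Finset.prod_mul_distrib]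
  ring

theorem det_submatrix_id_eq_zero_of_not_injective (N : Matrix (Fin m) X R) {p : Fin m → X}
    (hp : ¬ Function.Injective p) : (N.submatrix id p).det = 0 := by
  obtain ⟨i, j, hij, hne⟩ : ∃ i j, p i = p j ∧ i ≠ j := by
    simpa [Function.Injective] using hp
  exact det_zero_of_column_eq hne fun k => by simp [hij]

theorem det_mul_eq_sum_det_submatrix_mul_det_submatrix [Fintype X] [DecidableEq X]
    (c : ∀ s : Finset X, s.card = m → Fin m → X) (hc : ∀ s hs, Function.Injective (c s hs))
    (hcs : ∀ s hs i, c s hs i ∈ s) (N : Matrix (Fin m) X R) (P : Matrix X (Fin m) R) :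
    (N * P).det = ∑ s : {s : Finset X // s.card = m},
      (N.submatrix id (c s.1 s.2)).det * (P.submatrix (c s.1 s.2) id).det := by
  rw [det_mul_eq_sum_prod_mul_det_submatrix,
    ← Finset.sum_subset (Finset.subset_univ (Finset.univ.image
      fun x : {s : Finset X // s.card = m} × Equiv.Perm (Fin m) => c x.1 x.1.2 ∘ x.2)),
    Finset.sum_image fun x _ y _ h => injective_enum_comp_perm c hc hcs h, Fintype.sum_prod_type]
  · refine Finset.sum_congr rfl fun s _ => ?_
    simp only [Function.comp_apply, det_apply' (P.submatrix _ id), submatrix_apply, id_eq,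
      Finset.mul_sum]
    refine Finset.sum_congr rfl fun σ _ => ?_
    rw [show N.submatrix id (c s.1 s.2 ∘ σ) = (N.submatrix id (c s.1 s.2)).submatrix id σ from rfl,
      det_permute']
    ring
  · intro p _ hp
    have hp_not_inj : ¬ Function.Injective p := fun hinj => hp <| by
      obtain ⟨x, hx⟩ := exists_enum_comp_perm_eq c hc hcs hinj
      exact Finset.mem_image.mpr ⟨x, Finset.mem_univ _, hx⟩
    rw [det_submatrix_id_eq_zero_of_not_injective N hp_not_inj, mul_zero]

end Matrix

lemma colsOf_injective (n : ℕ) (s : Finset (Fin n ⊕ Fin n)) (hs : s.card = n) :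
    Function.Injective (colsOf n s hs) := fun _ _ h =>
  (Finset.orderIsoOfFin _ _).injective (Subtype.ext (finSumFinEquiv.symm.injective h))

lemma colsOf_mem (n : ℕ) (s : Finset (Fin n ⊕ Fin n)) (hs : s.card = n) (i : Fin n) :
    colsOf n s hs i ∈ s := by
  obtain ⟨a, ha, he⟩ := Finset.mem_image.mp (((s.image finSumFinEquiv).orderIsoOfFin
    (by rw [Finset.card_image_of_injective _ finSumFinEquiv.injective, hs]) i).2)
  rw [colsOf, ← he, Equiv.symm_apply_apply]
  exact ha

lemma detCoord_Pl {F : Type*} [Field F] {n : ℕ} (g : Matrix (Fin n ⊕ Fin n) (Fin n ⊕ Fin n) F)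
    (s : Finset (Fin n ⊕ Fin n)) (hs : s.card = n) :
    detCoord F n s hs (Pl F n g) = (g.toRows₂.submatrix id (colsOf n s hs)).det := by
  rw [Pl, detCoord, ExteriorAlgebra.liftAlternating_apply_ιMulti, dif_pos rfl]
  rfl

lemma realWedgeNorm_Pl {n : ℕ} (g : Matrix (Fin n ⊕ Fin n) (Fin n ⊕ Fin n) ℝ) :
    realWedgeNorm n (Pl ℝ n g) = √(g.toRows₂ * g.toRows₂ᵀ).det := by
  rw [realWedgeNorm, det_mul_eq_sum_det_submatrix_mul_det_submatrix (colsOf n)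
    (colsOf_injective n) (colsOf_mem n)]
  congr 1
  refine Finset.sum_congr rfl fun s _ => ?_
  rw [detCoord_Pl, sq, ← transpose_submatrix, det_transpose]

namespace Matrix
variable {l R : Type*} [Fintype l] [CommRing R]

lemma toRows₂_mul {n : Type*} (x : Matrix (l ⊕ l) (l ⊕ l) R) (k : Matrix (l ⊕ l) n R) :
    (x * k).toRows₂ = x.toRows₂ * k := rfl

lemma toRows₂_fromBlocks_zero₂₁_mul (A B E : Matrix l l R) (x : Matrix (l ⊕ l) (l ⊕ l) R) :
    (fromBlocks A B 0 E * x).toRows₂ = E * x.toRows₂ := by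
  rw [← fromRows_toRows x, fromBlocks_mul_fromRows, toRows₂_fromRows, toRows₂_fromRows,
    Matrix.zero_mul, zero_add]

lemma det_toRows₂_mul_transpose_fromBlocks_zero₂₁_mul_mul [DecidableEq l] (A B E : Matrix l l R)
    (x : Matrix (l ⊕ l) (l ⊕ l) R) {k : Matrix (l ⊕ l) (l ⊕ l) R} (hk : k * kᵀ = 1) :
    ((fromBlocks A B 0 E * x * k).toRows₂ * (fromBlocks A B 0 E * x * k).toRows₂ᵀ).det =
      E.det ^ 2 * (x.toRows₂ * x.toRows₂ᵀ).det := by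
  have hgram : (fromBlocks A B 0 E * x * k).toRows₂ * (fromBlocks A B 0 E * x * k).toRows₂ᵀ =
      E * (x.toRows₂ * x.toRows₂ᵀ) * Eᵀ := by
    rw [toRows₂_mul, toRows₂_fromBlocks_zero₂₁_mul]
    simp only [transpose_mul, Matrix.mul_assoc, ← Matrix.mul_assoc k kᵀ, hk]
    rw [Matrix.one_mul]
  rw [hgram, det_mul, det_mul, det_transpose]
  ring

end Matrix

namespace SymplecticGroup
variable {l R : Type*} [Fintype l] [DecidableEq l] [CommRing R]

lemma inv_mem {A : Matrix (l ⊕ l) (l ⊕ l) R} (hA : A ∈ symplecticGroup l R) :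
    A⁻¹ ∈ symplecticGroup l R := by
  simpa only [coe_inv'] using (⟨A, hA⟩⁻¹ : symplecticGroup l R).2

lemma toRows₂_mul_J_mul_transpose {A : Matrix (l ⊕ l) (l ⊕ l) R} (hA : A ∈ symplecticGroup l R) :
    A.toRows₂ * J l R * A.toRows₂ᵀ = 0 := by
  ext i j
  exact congrFun (congrFun (mem_iff.mp hA) (Sum.inr i)) (Sum.inr j)

lemma transpose_mul_eq_one_of_fromBlocks_zero₂₁_mem {A B E : Matrix l l R}
    (h : fromBlocks A B 0 E ∈ symplecticGroup l R) : Aᵀ * E = 1 := by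
  simpa using (fromBlocks_mem_iff.mp h).2.2

variable {M : Matrix l (l ⊕ l) R}

lemma mul_transpose_mul_J_eq_zero (hMJ : M * J l R * Mᵀ = 0) : M * (M * J l R)ᵀ = 0 := by
  rw [transpose_mul, J_transpose, Matrix.neg_mul, Matrix.mul_neg, ← Matrix.mul_assoc, hMJ, neg_zero]

lemma mul_J_mul_transpose_mul_J (hM : M * Mᵀ = 1) : M * J l R * (M * J l R)ᵀ = 1 := by
  rw [transpose_mul, J_transpose, Matrix.mul_assoc, ← Matrix.mul_assoc (J l R), Matrix.mul_neg,
    J_squared, neg_neg, Matrix.one_mul, hM]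

lemma fromRows_mul_J_mul_transpose_self (hM : M * Mᵀ = 1) (hMJ : M * J l R * Mᵀ = 0) :
    fromRows (M * J l R) M * (fromRows (M * J l R) M)ᵀ = 1 := by
  rw [transpose_fromRows, fromRows_mul_fromCols, mul_J_mul_transpose_mul_J hM, hMJ, hM,
    mul_transpose_mul_J_eq_zero hMJ, fromBlocks_one]

lemma fromRows_mul_J_mem (hM : M * Mᵀ = 1) (hMJ : M * J l R * Mᵀ = 0) :
    fromRows (M * J l R) M ∈ symplecticGroup l R := by
  have hMJJ : M * J l R * J l R = -M := by
    rw [Matrix.mul_assoc, J_squared, Matrix.mul_neg, Matrix.mul_one]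
  rw [mem_iff, fromRows_mul, transpose_fromRows, fromRows_mul_fromCols, hMJJ, Matrix.neg_mul,
    Matrix.neg_mul, mul_transpose_mul_J_eq_zero hMJ, hM, mul_J_mul_transpose_mul_J hM, hMJ,
    neg_zero]
  rfl

end SymplecticGroup

section Siegel
open SymplecticGroup
variable {F : Type*} [Field F] {n : ℕ}

lemma Jmat_eq_neg_J : Jmat F n = -J (Fin n) F := by
  rw [Jmat, J, fromBlocks_neg, neg_zero, neg_neg]

lemma Sp_eq_symplecticGroup : Sp F n = symplecticGroup (Fin n) F := by
  have hJ : J (Fin n) F * Jmat F n = 1 := by rw [Jmat_eq_neg_J, Matrix.mul_neg, J_squared, neg_neg]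
  have hJinv : (Jmat F n)⁻¹ = J (Fin n) F := inv_eq_left_inv hJ
  ext g
  rw [Sp, Set.mem_ofPred_eq, hJinv, SetLike.mem_coe, mem_iff]
  exact ⟨fun h => (inv_eq_left_inv h).symm.trans hJinv, fun h => by rw [h, hJ]⟩

lemma fromBlocks_mem_SiegelPP {A B E : Matrix (Fin n) (Fin n) F}
    (h : fromBlocks A B 0 E ∈ symplecticGroup (Fin n) F) (hE : E.det = 1) :
    fromBlocks A B 0 E ∈ SiegelPP F n := by
  have hAE : Aᵀ * E = 1 := transpose_mul_eq_one_of_fromBlocks_zero₂₁_mem h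
  refine ⟨Sp_eq_symplecticGroup (F := F) ▸ h, A, B, by rw [inv_eq_right_inv hAE], ?_⟩
  simpa [hE] using congrArg det hAE

lemma fromBlocks_mul_inv_mem_SiegelPP {A B E A' B' E' : Matrix (Fin n) (Fin n) F}
    (hP : fromBlocks A B 0 E ∈ symplecticGroup (Fin n) F)
    (hP' : fromBlocks A' B' 0 E' ∈ symplecticGroup (Fin n) F) (hE : E.det = E'.det) :
    fromBlocks A B 0 E * (fromBlocks A' B' 0 E')⁻¹ ∈ SiegelPP F n := by
  have hA'E' := transpose_mul_eq_one_of_fromBlocks_zero₂₁_mem hP'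
  have hdet : A'.det * E'.det = 1 := by simpa using congrArg det hA'E'
  have hA' : IsUnit A' := (isUnit_iff_isUnit_det A').mpr (IsUnit.of_mul_eq_one _ hdet)
  have hE' : IsUnit E'.det := IsUnit.of_mul_eq_one_right _ hdet
  have hmem := mul_mem hP (inv_mem hP')
  rw [inv_fromBlocks_zero₂₁_of_isUnit_iff _ _ _
    (iff_of_true hA' ((isUnit_iff_isUnit_det E').mpr hE')), fromBlocks_multiply] at hmem ⊢
  simp only [Matrix.mul_zero, Matrix.zero_mul, add_zero, zero_add] at hmem ⊢
  refine fromBlocks_mem_SiegelPP hmem ?_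
  rw [det_mul, det_nonsing_inv, hE, Ring.mul_inverse_cancel _ hE']

end Siegel

namespace Matrix
variable {l : Type*} [Fintype l] [DecidableEq l]

lemma posDef_toRows₂_mul_transpose {g : Matrix (l ⊕ l) (l ⊕ l) ℝ} (hg : IsUnit g) :
    (g.toRows₂ * g.toRows₂ᵀ).PosDef := by
  refine PosDef.mul_conjTranspose_self _ fun x y hxy => ?_
  have hrows : ∀ v, v ᵥ* g.toRows₂ = Sum.elim 0 v ᵥ* g := fun v => by
    rw [← fromRows_toRows g, sumElim_vecMul_fromRows, zero_vecMul, zero_add, toRows₂_fromRows]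
  have h := vecMul_injective_of_isUnit hg (by simpa only [hrows] using hxy)
  simpa using congrArg (fun v => v ∘ Sum.inr) h

open scoped MatrixOrder in
lemma PosDef.exists_symm_mul_self_eq {S : Matrix l l ℝ} (hS : S.PosDef) :
    ∃ R : Matrix l l ℝ, Rᵀ = R ∧ R * R = S ∧ R.det = √S.det := by
  have hR : (CFC.sqrt S).PosSemidef := nonneg_iff_posSemidef.mp (CFC.sqrt_nonneg S)
  have hRR : CFC.sqrt S * CFC.sqrt S = S :=
    CFC.sqrt_mul_sqrt_self S (nonneg_iff_posSemidef.mpr hS.posSemidef)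
  refine ⟨CFC.sqrt S, ?_, hRR, ?_⟩
  · simpa [IsHermitian] using hR.1
  · rw [← Real.sqrt_mul_self hR.det_nonneg, ← det_mul, hRR]

end Matrix

namespace SymplecticGroup
variable {l : Type*} [Fintype l] [DecidableEq l]

/-- Iwasawa decomposition `Sp_{2n}(ℝ) = P K`. -/
theorem exists_eq_fromBlocks_zero₂₁_mul_orthogonal {g : Matrix (l ⊕ l) (l ⊕ l) ℝ}
    (hg : g ∈ symplecticGroup l ℝ) :
    ∃ k ∈ symplecticGroup l ℝ, k * kᵀ = 1 ∧ ∃ A B E : Matrix l l ℝ,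
      fromBlocks A B 0 E ∈ symplecticGroup l ℝ ∧ E.det = √(g.toRows₂ * g.toRows₂ᵀ).det ∧
        g = fromBlocks A B 0 E * k := by
  have hS := posDef_toRows₂_mul_transpose ((isUnit_iff_isUnit_det g).mpr (symplectic_det hg))
  obtain ⟨R, hRt, hRR, hRdet⟩ := hS.exists_symm_mul_self_eq
  have hRunit : IsUnit R.det := by
    rw [hRdet]; exact (Real.sqrt_pos.mpr hS.det_pos).ne'.isUnit
  -- The rows of `N = R⁻¹ * g.toRows₂` are orthonormal and isotropic, so they are the bottom rows
  -- of some `k ∈ K`; then `g * kᵀ` has bottom rows `(0 | R)`.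
  obtain ⟨N, hN_def⟩ : ∃ N, R⁻¹ * g.toRows₂ = N := ⟨_, rfl⟩
  have hNt : Nᵀ = g.toRows₂ᵀ * R⁻¹ := by rw [← hN_def, transpose_mul, transpose_nonsing_inv, hRt]
  have hN : N * Nᵀ = 1 := calc
    N * Nᵀ = R⁻¹ * (g.toRows₂ * g.toRows₂ᵀ) * R⁻¹ := by
      rw [hNt, ← hN_def]; simp only [Matrix.mul_assoc]
    _ = 1 := by
      rw [← hRR, ← Matrix.mul_assoc, nonsing_inv_mul _ hRunit, Matrix.one_mul,
        mul_nonsing_inv _ hRunit]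
  have hNJ : N * J l ℝ * Nᵀ = 0 := calc
    N * J l ℝ * Nᵀ = R⁻¹ * (g.toRows₂ * J l ℝ * g.toRows₂ᵀ) * R⁻¹ := by
      rw [hNt, ← hN_def]; simp only [Matrix.mul_assoc]
    _ = 0 := by rw [toRows₂_mul_J_mul_transpose hg, Matrix.mul_zero, Matrix.zero_mul]
  set k := fromRows (N * J l ℝ) N
  have hk : k * kᵀ = 1 := fromRows_mul_J_mul_transpose_self hN hNJ
  have hrows : (g * kᵀ).toRows₂ = fromCols 0 R := by
    have hMN : g.toRows₂ = R * N := by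
      rw [← hN_def, ← Matrix.mul_assoc, mul_nonsing_inv _ hRunit, Matrix.one_mul]
    rw [toRows₂_mul, transpose_fromRows, mul_fromCols, hMN, Matrix.mul_assoc, Matrix.mul_assoc,
      mul_transpose_mul_J_eq_zero hNJ, hN, Matrix.mul_zero, Matrix.mul_one]
  have h21 : (g * kᵀ).toBlocks₂₁ = 0 := (congrArg toCols₁ hrows).trans (toCols₁_fromCols _ _)
  have h22 : (g * kᵀ).toBlocks₂₂ = R := (congrArg toCols₂ hrows).trans (toCols₂_fromCols _ _)
  have hkmem : k ∈ symplecticGroup l ℝ := fromRows_mul_J_mem hN hNJ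
  have hP : fromBlocks (g * kᵀ).toBlocks₁₁ (g * kᵀ).toBlocks₁₂ 0 R = g * kᵀ := by
    rw [← h21, ← h22, fromBlocks_toBlocks]
  refine ⟨k, hkmem, hk, _, _, R, hP ▸ mul_mem hg (transpose_mem hkmem), hRdet, ?_⟩
  rw [hP, Matrix.mul_assoc, mul_eq_one_comm.mp hk, Matrix.mul_one]

end SymplecticGroup

theorem plNorm_eq_iff_same_double_coset_real (n : ℕ)
    (g h : Matrix (Fin n ⊕ Fin n) (Fin n ⊕ Fin n) ℝ)
    (hg : g ∈ Sp ℝ n) (hh : h ∈ Sp ℝ n) :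
    realWedgeNorm n (Pl ℝ n g) = realWedgeNorm n (Pl ℝ n h) ↔
      ∃ q ∈ SiegelPP ℝ n, ∃ k ∈ Sp ℝ n, k * kᵀ = 1 ∧ g = q * h * k := by
  rw [realWedgeNorm_Pl, realWedgeNorm_Pl]
  constructor
  · intro hnorm
    rw [Sp_eq_symplecticGroup] at hg hh ⊢
    obtain ⟨kg, hkg, hkg_orth, Ag, Bg, Eg, hPg, hEg, rfl⟩ :=
      SymplecticGroup.exists_eq_fromBlocks_zero₂₁_mul_orthogonal hg
    obtain ⟨kh, hkh, hkh_orth, Ah, Bh, Eh, hPh, hEh, rfl⟩ :=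
      SymplecticGroup.exists_eq_fromBlocks_zero₂₁_mul_orthogonal hh
    refine ⟨_, fromBlocks_mul_inv_mem_SiegelPP hPg hPh (by rw [hEg, hEh, hnorm]), khᵀ * kg,
      mul_mem (SymplecticGroup.transpose_mem hkh) hkg, ?_, ?_⟩
    · rw [transpose_mul, transpose_transpose, Matrix.mul_assoc, ← Matrix.mul_assoc kg, hkg_orth,
        Matrix.one_mul, mul_eq_one_comm.mp hkh_orth]
    · calc fromBlocks Ag Bg 0 Eg * kg
          = fromBlocks Ag Bg 0 Eg * ((fromBlocks Ah Bh 0 Eh)⁻¹ * fromBlocks Ah Bh 0 Eh) *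
              (kh * khᵀ) * kg := by
            rw [nonsing_inv_mul _ (SymplecticGroup.symplectic_det hPh), hkh_orth, Matrix.mul_one,
              Matrix.mul_one]
        _ = _ := by simp only [Matrix.mul_assoc]
  · rintro ⟨q, ⟨-, A, B, rfl, hA⟩, k, -, hk, rfl⟩
    rw [det_toRows₂_mul_transpose_fromBlocks_zero₂₁_mul_mul _ _ _ _ hk, det_nonsing_inv,
      det_transpose, hA, Ring.inverse_one, one_pow, one_mul]
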